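/- Let Ω be a metric space, M ⊆ Ω a compact subset, ρ a Borel probability measure on Ω with compact support contained in M, k : Ω × Ω → ℝ a continuous kernel, and d : Ω → ℝ a continuous, strictly positive function satisfying the detailed-balance relation d(ω) k(ω, ω') = d(ω') k(ω', ω) for all ω, ω' ∈ M. Then every eigenvalue of the integral operator G_ρ on L²(ρ), defined by (G_ρ f)(ω) = ∫ k(ω, ω') f(ω') dρ(ω'), is real. -/

import Mathlib

open MeasureTheory

theorem stmt14 {Ω : Type*} [MetricSpace Ω] [MeasurableSpace Ω] [BorelSpace Ω]
    (M : Set Ω) (hM : IsCompact M) (ρ : Measure Ω) [IsProbabilityMeasure ρ]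
    (hsupp : ρ Mᶜ = 0) (k : Ω × Ω → ℝ) (hk : Continuous k)
    (d : Ω → ℝ) (hd : Continuous d) (hdpos : ∀ ω, 0 < d ω)
    (hbal : ∀ ω ∈ M, ∀ ω' ∈ M, d ω * k (ω, ω') = d ω' * k (ω', ω))
    (lam : ℂ) (f : Ω → ℂ) (hf : MemLp f 2 ρ) (hf0 : ¬ f =ᵐ[ρ] 0)
    (heig : (fun ω => ∫ ω', (k (ω, ω') : ℂ) * f ω' ∂ρ) =ᵐ[ρ] fun ω => lam * f ω) :
    lam.im = 0 := by
  classical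
  have hMae : ∀ᵐ ω ∂ρ, ω ∈ M := by
    rw [ae_iff]
    exact hsupp
  have hMne : M.Nonempty := by
    rcases M.eq_empty_or_nonempty with h | h
    · exfalso
      rw [h, Set.compl_empty] at hsupp
      simp at hsupp
    · exact h
  -- bounds on d and k on the compact set
  obtain ⟨ωd, hωd, hCd'⟩ := hM.exists_isMaxOn hMne hd.continuousOn
  set Cd : ℝ := d ωd with hCddef
  have hCd : ∀ ω ∈ M, d ω ≤ Cd := fun ω hω => hCd' hω
  obtain ⟨zk, hzk, hCk'⟩ := (hM.prod hM).exists_isMaxOn (hMne.prod hMne)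
    (hk.norm.continuousOn)
  set Ck : ℝ := ‖k zk‖ with hCkdef
  have hCk : ∀ z ∈ M ×ˢ M, ‖k z‖ ≤ Ck := fun z hz => hCk' hz
  have hCknn : 0 ≤ Ck := norm_nonneg _
  have hCdnn : 0 ≤ Cd := (hdpos ωd).le
  -- basic integrability facts
  have hfi : Integrable f ρ := hf.integrable one_le_two
  have hfm : AEStronglyMeasurable f ρ := hf.aestronglyMeasurable
  -- the kernel with weight
  set F : Ω → Ω → ℂ := fun ω ω' => (d ω : ℂ) * (starRingEnd ℂ) (f ω) * ((k (ω, ω') : ℂ) * f ω')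
    with hFdef
  -- a.e. membership in M × M for the product measure
  have hz1 : (ρ.prod ρ) (Mᶜ ×ˢ (Set.univ : Set Ω)) = 0 := by
    rw [Measure.prod_prod, hsupp, zero_mul]
  have hz2 : (ρ.prod ρ) ((Set.univ : Set Ω) ×ˢ Mᶜ) = 0 := by
    rw [Measure.prod_prod, hsupp, mul_zero]
  have hprodae : ∀ᵐ z ∂(ρ.prod ρ), z.1 ∈ M ∧ z.2 ∈ M := by
    rw [ae_iff]
    refine measure_mono_null (fun z hz => ?_) (measure_union_null hz1 hz2)
    simp only [Set.mem_setOf_eq, not_and_or] at hz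
    rcases hz with h | h
    · exact Or.inl ⟨h, trivial⟩
    · exact Or.inr ⟨trivial, h⟩
  -- a.e. strongly measurable projections (via separability of M)
  obtain ⟨m₀, hm₀⟩ := hMne
  have hsep : TopologicalSpace.IsSeparable (M ∪ {m₀} : Set Ω) :=
    (hM.isSeparable).union (Set.finite_singleton m₀).isSeparable
  have hMmeas : MeasurableSet M := hM.isClosed.measurableSet
  have hproj : ∀ (p : Ω × Ω → Ω), Measurable p →
      (∀ᵐ z ∂(ρ.prod ρ), p z ∈ M) →
      AEStronglyMeasurable p (ρ.prod ρ) := by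
    intro p hpm hpM
    refine ⟨fun z => if p z ∈ M then p z else m₀, ?_, ?_⟩
    · rw [stronglyMeasurable_iff_measurable_separable]
      constructor
      · exact Measurable.ite (hpm hMmeas) hpm measurable_const
      · refine hsep.mono ?_
        rintro x ⟨z, rfl⟩
        by_cases h : p z ∈ M
        · simp only [if_pos h]; exact Or.inl h
        · simp only [if_neg h]; exact Or.inr rfl
    · filter_upwards [hpM] with z hz
      rw [if_pos hz]
  have hfst : AEStronglyMeasurable (fun z : Ω × Ω => z.1) (ρ.prod ρ) :=
    hproj _ measurable_fst (by filter_upwards [hprodae] with z hz using hz.1)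
  have hsnd : AEStronglyMeasurable (fun z : Ω × Ω => z.2) (ρ.prod ρ) :=
    hproj _ measurable_snd (by filter_upwards [hprodae] with z hz using hz.2)
  -- integrability of the double integrand
  have hdom : Integrable (fun z : Ω × Ω => Cd * Ck * (‖f z.1‖ * ‖f z.2‖)) (ρ.prod ρ) :=
    (hfi.norm.mul_prod hfi.norm).const_mul (Cd * Ck)
  have hFm : AEStronglyMeasurable (Function.uncurry F) (ρ.prod ρ) := by
    have h1 : AEStronglyMeasurable (fun z : Ω × Ω => ((d z.1 : ℝ) : ℂ)) (ρ.prod ρ) :=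
      (Complex.continuous_ofReal.comp hd).comp_aestronglyMeasurable hfst
    have h2 : AEStronglyMeasurable (fun z : Ω × Ω => (starRingEnd ℂ) (f z.1)) (ρ.prod ρ) :=
      Complex.continuous_conj.comp_aestronglyMeasurable (hfm.comp_fst)
    have h3 : AEStronglyMeasurable (fun z : Ω × Ω => ((k z : ℝ) : ℂ)) (ρ.prod ρ) :=
      (Complex.continuous_ofReal.comp hk).comp_aestronglyMeasurable (hfst.prodMk hsnd)
    have h4 : AEStronglyMeasurable (fun z : Ω × Ω => f z.2) (ρ.prod ρ) := hfm.comp_snd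
    exact ((h1.mul h2).mul (h3.mul h4))
  have hFbound : ∀ᵐ z ∂(ρ.prod ρ), ‖Function.uncurry F z‖ ≤
      Cd * Ck * (‖f z.1‖ * ‖f z.2‖) := by
    filter_upwards [hprodae] with z hz
    have hd1 : d z.1 ≤ Cd := hCd z.1 hz.1
    have hk1 : ‖k z‖ ≤ Ck := hCk z ⟨hz.1, hz.2⟩
    have hd1' : (0:ℝ) < d z.1 := hdpos z.1
    have : ‖Function.uncurry F z‖ = d z.1 * ‖f z.1‖ * (‖k z‖ * ‖f z.2‖) := by
      simp only [Function.uncurry, hFdef, norm_mul, Complex.norm_real, RCLike.norm_conj,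
        Real.norm_eq_abs, abs_of_pos hd1']
    rw [this]
    have h0 : (0:ℝ) ≤ ‖f z.1‖ := norm_nonneg _
    have h0' : (0:ℝ) ≤ ‖f z.2‖ := norm_nonneg _
    have h0k : (0:ℝ) ≤ ‖k z‖ := norm_nonneg _
    calc d z.1 * ‖f z.1‖ * (‖k z‖ * ‖f z.2‖)
        = (d z.1 * ‖k z‖) * (‖f z.1‖ * ‖f z.2‖) := by ring
      _ ≤ (Cd * Ck) * (‖f z.1‖ * ‖f z.2‖) :=
          mul_le_mul_of_nonneg_right (mul_le_mul hd1 hk1 h0k hCdnn)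
            (mul_nonneg h0 h0')
  have hFint : Integrable (Function.uncurry F) (ρ.prod ρ) :=
    Integrable.mono' hdom hFm hFbound
  have hGint : Integrable (fun z : Ω × Ω => (starRingEnd ℂ) (Function.uncurry F z)) (ρ.prod ρ) := by
    refine Integrable.mono' hdom
      (Complex.continuous_conj.comp_aestronglyMeasurable hFm) ?_
    filter_upwards [hFbound] with z hz
    simpa [RCLike.norm_conj] using hz
  -- the quantity S
  set S : ℂ := ∫ ω, ∫ ω', F ω ω' ∂ρ ∂ρ with hSdef
  set T : ℝ := ∫ ω, d ω * ‖f ω‖ ^ 2 ∂ρ with hTdef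
  -- Step A: S = lam * T
  have hS1 : S = lam * (T : ℂ) := by
    have hA : S = ∫ ω, (d ω : ℂ) * (starRingEnd ℂ) (f ω) * (lam * f ω) ∂ρ := by
      rw [hSdef]
      refine integral_congr_ae ?_
      filter_upwards [heig] with ω hω
      have : (∫ ω', F ω ω' ∂ρ) =
          (d ω : ℂ) * (starRingEnd ℂ) (f ω) * ∫ ω', (k (ω, ω') : ℂ) * f ω' ∂ρ :=
        integral_const_mul _ _
      rw [this, hω]
    rw [hA]
    have hB : (fun ω => (d ω : ℂ) * (starRingEnd ℂ) (f ω) * (lam * f ω)) =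
        fun ω => lam * (((d ω * ‖f ω‖ ^ 2 : ℝ) : ℂ)) := by
      funext ω
      have : (starRingEnd ℂ) (f ω) * f ω = ((‖f ω‖ : ℂ)) ^ 2 := RCLike.conj_mul (f ω)
      push_cast
      rw [show (d ω : ℂ) * (starRingEnd ℂ) (f ω) * (lam * f ω) =
        lam * ((d ω : ℂ) * ((starRingEnd ℂ) (f ω) * f ω)) by ring, this]
    rw [hB, integral_const_mul, hTdef]
    congr 1
    exact integral_ofReal (𝕜 := ℂ) (f := fun ω => d ω * ‖f ω‖ ^ 2)
  -- Step B: conj S = S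
  have hSreal : (starRingEnd ℂ) S = S := by
    have h1 : (starRingEnd ℂ) S = ∫ ω, ∫ ω', (starRingEnd ℂ) (F ω ω') ∂ρ ∂ρ := by
      rw [hSdef, ← integral_conj]
      refine integral_congr_ae (Filter.Eventually.of_forall fun ω => ?_)
      exact (integral_conj (f := fun ω' => F ω ω')).symm
    have h2 : (∫ ω, ∫ ω', (starRingEnd ℂ) (F ω ω') ∂ρ ∂ρ) =
        ∫ ω', ∫ ω, (starRingEnd ℂ) (F ω ω') ∂ρ ∂ρ :=
      integral_integral_swap hGint
    have h3 : (∫ ω', ∫ ω, (starRingEnd ℂ) (F ω ω') ∂ρ ∂ρ) = S := by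
      rw [hSdef]
      refine integral_congr_ae ?_
      filter_upwards [hMae] with a ha
      refine integral_congr_ae ?_
      filter_upwards [hMae] with b hb
      have hba : ((d b : ℂ) * (k (b, a) : ℂ)) = (d a : ℂ) * (k (a, b) : ℂ) := by
        norm_cast
        exact hbal b hb a ha
      simp only [hFdef, map_mul, Complex.conj_ofReal, Complex.conj_conj]
      linear_combination (f b * (starRingEnd ℂ) (f a)) * hba
    rw [h1, h2, h3]
  -- T is nonzero
  have hsq : Integrable (fun ω => ‖f ω‖ ^ 2) ρ := by
    have hhalf : (1 : ENNReal) / 1 = 1 / 2 + 1 / 2 := by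
      rw [ENNReal.div_add_div_same, one_add_one_eq_two, ENNReal.div_self two_ne_zero
        ENNReal.ofNat_ne_top, div_one]
    have h2 := (hf.norm).smul (r := 1) (hf.norm)
    have h2' : Integrable (fun ω => ‖f ω‖ * ‖f ω‖) ρ := by
      exact memLp_one_iff_integrable.mp h2
    simpa [pow_two] using h2'
  have hTint : Integrable (fun ω => d ω * ‖f ω‖ ^ 2) ρ := by
    refine Integrable.mono' (hsq.const_mul Cd)
      (hd.aestronglyMeasurable.mul (hfm.norm.pow 2)) ?_
    filter_upwards [hMae] with ω hω
    have h1 : (0:ℝ) ≤ d ω * ‖f ω‖ ^ 2 := mul_nonneg (hdpos ω).le (sq_nonneg _)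
    rw [Real.norm_eq_abs, abs_of_nonneg h1]
    exact mul_le_mul_of_nonneg_right (hCd ω hω) (sq_nonneg _)
  have hTne : T ≠ 0 := by
    intro h
    rw [hTdef, integral_eq_zero_iff_of_nonneg
      (fun ω => mul_nonneg (hdpos ω).le (sq_nonneg _)) hTint] at h
    apply hf0
    filter_upwards [h] with ω hω
    have hω' : d ω * ‖f ω‖ ^ 2 = 0 := hω
    have : ‖f ω‖ ^ 2 = 0 := by
      rcases mul_eq_zero.mp hω' with h' | h'
      · exact absurd h' (hdpos ω).ne'
      · exact h'
    simpa [pow_eq_zero_iff, norm_eq_zero] using this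
  -- conclude
  have hSim : S.im = 0 := Complex.conj_eq_iff_im.mp hSreal
  rw [hS1] at hSim
  simp only [Complex.mul_im, Complex.ofReal_re, Complex.ofReal_im, mul_zero, add_zero,
    zero_add] at hSim
  rcases mul_eq_zero.mp hSim with h | h
  · exact h
  · exact absurd h hTne
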